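/- Let σ ∈ M_n(ℂ) be positive definite. Define M(X) = ∫_0^1 σ^{1-s} X σ^s ds on M_n(ℂ). Then M is invertible with inverse M^{-1}(X) = ∫_0^∞ (σ + t·I)^{-1} X (σ + t·I)^{-1} dt. -/

import Mathlib

/-!
Diagonalise `σ = U diag(λ) U*`. In the eigenbasis both `M` and the candidate inverse act as Schur
(entrywise) multipliers, with symbols `∫₀¹ λₖ^(1-s) λₗ^s ds` and `∫₀^∞ dt / ((λₖ + t)(λₗ + t))`.
For `a ≠ b` these are the logarithmic mean `(b - a) / (log b - log a)` and its reciprocal (for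
`a = b`, `a` and `a⁻¹`), so the two multipliers are mutually inverse.
-/

open Matrix MeasureTheory
open scoped ComplexOrder

/-- Real powers of a Hermitian matrix, via its spectral decomposition. -/
noncomputable def mpow {n : ℕ} {σ : Matrix (Fin n) (Fin n) ℂ} (hσ : σ.IsHermitian)
    (t : ℝ) : Matrix (Fin n) (Fin n) ℂ :=
  (hσ.eigenvectorUnitary : Matrix (Fin n) (Fin n) ℂ) *
    Matrix.diagonal (fun i => ((hσ.eigenvalues i ^ t : ℝ) : ℂ)) *
    (star hσ.eigenvectorUnitary : Matrix (Fin n) (Fin n) ℂ)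

/-- The BKM multiplication operator `M(X) = ∫_0^1 σ^{1-s} X σ^s ds` (entrywise integral). -/
noncomputable def bkmM {n : ℕ} {σ : Matrix (Fin n) (Fin n) ℂ} (hσ : σ.IsHermitian)
    (X : Matrix (Fin n) (Fin n) ℂ) : Matrix (Fin n) (Fin n) ℂ :=
  Matrix.of fun i j => ∫ s in (0:ℝ)..1, (mpow hσ (1 - s) * X * mpow hσ s) i j

/-- The candidate inverse `M⁻¹(X) = ∫_0^∞ (σ + t I)⁻¹ X (σ + t I)⁻¹ dt` (entrywise integral). -/
noncomputable def bkmMinv {n : ℕ} (σ : Matrix (Fin n) (Fin n) ℂ)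
    (X : Matrix (Fin n) (Fin n) ℂ) : Matrix (Fin n) (Fin n) ℂ :=
  Matrix.of fun i j =>
    ∫ t in Set.Ioi (0:ℝ),
      ((σ + (t : ℂ) • (1 : Matrix (Fin n) (Fin n) ℂ))⁻¹ * X *
        (σ + (t : ℂ) • (1 : Matrix (Fin n) (Fin n) ℂ))⁻¹) i j

open Set Filter Topology Real

section LogarithmicMean

variable {a b : ℝ}

lemma rpow_one_sub_mul_rpow_eq_mul_exp (ha : 0 < a) (hb : 0 < b) (s : ℝ) :
    a ^ (1 - s) * b ^ s = a * exp (s * (log b - log a)) := by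
  rw [rpow_def_of_pos ha, rpow_def_of_pos hb, ← exp_add, mul_comm a, ← exp_log ha, ← exp_add,
    log_exp]
  ring_nf

lemma log_sub_log_ne_zero (ha : 0 < a) (hb : 0 < b) (hab : a ≠ b) : log b - log a ≠ 0 :=
  sub_ne_zero.2 fun h => hab (log_injOn_pos ha hb h.symm)

lemma integral_rpow_one_sub_mul_rpow (ha : 0 < a) (hb : 0 < b) (hab : a ≠ b) :
    ∫ s in (0:ℝ)..1, a ^ (1 - s) * b ^ s = (b - a) / (log b - log a) := by
  have hc := log_sub_log_ne_zero ha hb hab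
  simp_rw [rpow_one_sub_mul_rpow_eq_mul_exp ha hb, intervalIntegral.integral_const_mul]
  rw [intervalIntegral.integral_comp_mul_right exp hc, integral_exp, zero_mul, one_mul, exp_zero,
    exp_sub, exp_log ha, exp_log hb, smul_eq_mul]
  field_simp

lemma integral_rpow_one_sub_mul_rpow_self (ha : 0 < a) :
    ∫ s in (0:ℝ)..1, a ^ (1 - s) * a ^ s = a := by
  simp [← rpow_add ha]

lemma integral_Ioi_inv_add_mul_add (ha : 0 < a) (hb : 0 < b) (hab : a ≠ b) :
    ∫ t in Ioi (0:ℝ), ((a + t) * (b + t))⁻¹ = (log b - log a) / (b - a) := by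
  have hab' : a - b ≠ 0 := sub_ne_zero.2 hab
  have hderiv : ∀ x ∈ Ici (0:ℝ), HasDerivAt (fun t => (log (b + t) - log (a + t)) / (a - b))
      ((a + x) * (b + x))⁻¹ x := by
    intro x (hx : 0 ≤ x)
    have hax : a + x ≠ 0 := by positivity
    have hbx : b + x ≠ 0 := by positivity
    refine ((((hasDerivAt_id' x).const_add b).log hbx).sub
      (((hasDerivAt_id' x).const_add a).log hax)).div_const (a - b) |>.congr_deriv ?_
    field_simp
    ring
  have hlim : Tendsto (fun t => (log (b + t) - log (a + t)) / (a - b)) atTop (𝓝 0) := by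
    simpa [add_comm] using
      ((tendsto_log_comp_add_sub_log b).sub (tendsto_log_comp_add_sub_log a)).div_const (a - b)
  rw [integral_Ioi_of_hasDerivAt_of_nonneg' hderiv (fun x (hx : 0 < x) => by positivity) hlim,
    add_zero, add_zero]
  field_simp
  ring

lemma integral_Ioi_inv_add_mul_add_self (ha : 0 < a) :
    ∫ t in Ioi (0:ℝ), ((a + t) * (a + t))⁻¹ = a⁻¹ := by
  have hderiv : ∀ x ∈ Ici (0:ℝ), HasDerivAt (fun t => -(a + t)⁻¹) ((a + x) * (a + x))⁻¹ x := by
    intro x (hx : 0 ≤ x)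
    have hax : a + x ≠ 0 := by positivity
    refine (((hasDerivAt_id' x).const_add a).inv hax).neg.congr_deriv ?_
    field_simp
  have hlim : Tendsto (fun t => -(a + t)⁻¹) atTop (𝓝 0) := by
    simpa using (tendsto_inv_atTop_zero.comp (tendsto_atTop_add_const_left _ a tendsto_id)).neg
  rw [integral_Ioi_of_hasDerivAt_of_nonneg' hderiv (fun x (hx : 0 < x) => by positivity) hlim]
  simp

theorem integral_rpow_one_sub_mul_rpow_mul_integral_Ioi_inv (ha : 0 < a) (hb : 0 < b) :
    (∫ s in (0:ℝ)..1, a ^ (1 - s) * b ^ s) * ∫ t in Ioi (0:ℝ), ((a + t) * (b + t))⁻¹ = 1 := by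
  rcases eq_or_ne a b with rfl | hab
  · rw [integral_rpow_one_sub_mul_rpow_self ha, integral_Ioi_inv_add_mul_add_self ha,
      mul_inv_cancel₀ ha.ne']
  · rw [integral_rpow_one_sub_mul_rpow ha hb hab, integral_Ioi_inv_add_mul_add ha hb hab]
    have hlog := log_sub_log_ne_zero ha hb hab
    have hba : b - a ≠ 0 := sub_ne_zero.2 hab.symm
    field_simp

lemma continuous_rpow_one_sub_mul_rpow (ha : 0 < a) (hb : 0 < b) :
    Continuous fun s : ℝ => a ^ (1 - s) * b ^ s := by
  simp_rw [rpow_one_sub_mul_rpow_eq_mul_exp ha hb]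
  fun_prop

lemma integrableOn_Ioi_inv_add_mul_add (ha : 0 < a) (hb : 0 < b) :
    IntegrableOn (fun t => ((a + t) * (b + t))⁻¹) (Ioi (0:ℝ)) :=
  -- a non-integrable function has Bochner integral `0`
  Integrable.of_integral_ne_zero
    (right_ne_zero_of_mul_eq_one (integral_rpow_one_sub_mul_rpow_mul_integral_Ioi_inv ha hb))

end LogarithmicMean

namespace Matrix

variable {ι R 𝕜 : Type*} [Fintype ι] [DecidableEq ι]

def schurMultiplier [CommRing R] [StarRing R] (U : unitaryGroup ι R) (C X : Matrix ι ι R) :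
    Matrix ι ι R :=
  (U : Matrix ι ι R) * (C ⊙ (star (U : Matrix ι ι R) * X * U)) * star (U : Matrix ι ι R)

theorem schurMultiplier_schurMultiplier_of_mul_eq_one [CommRing R] [StarRing R]
    (U : unitaryGroup ι R) {C D : Matrix ι ι R} (hCD : ∀ k l, C k l * D k l = 1)
    (X : Matrix ι ι R) : schurMultiplier U C (schurMultiplier U D X) = X := by
  set V : Matrix ι ι R := ↑U
  have h₁ : star V * V = 1 := Unitary.star_mul_self_of_mem U.2
  have h₂ : V * star V = 1 := Unitary.mul_star_self_of_mem U.2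
  have hCD' : C ⊙ (D ⊙ (star V * X * V)) = star V * X * V := by
    ext k l
    simp [← mul_assoc, hCD]
  have hV : ∀ A, star V * (V * A * star V) * V = A := fun A => by
    rw [← Matrix.mul_assoc, ← Matrix.mul_assoc, h₁, Matrix.one_mul, Matrix.mul_assoc, h₁,
      Matrix.mul_one]
  rw [schurMultiplier, schurMultiplier, hV, hCD', ← Matrix.mul_assoc, ← Matrix.mul_assoc, h₂,
    Matrix.one_mul, Matrix.mul_assoc, h₂, Matrix.mul_one]

theorem diagonal_mul_mul_diagonal [CommSemiring R] (d e : ι → R)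
    (Y : Matrix ι ι R) : diagonal d * Y * diagonal e = vecMulVec d e ⊙ Y := by
  ext k l
  simp only [mul_diagonal, diagonal_mul, hadamard_apply, vecMulVec_apply]
  ring

variable [RCLike 𝕜]

theorem integral_schurMultiplier_apply {α : Type*} [MeasurableSpace α] {μ : Measure α}
    (U : unitaryGroup ι 𝕜) (X : Matrix ι ι 𝕜) {C : α → Matrix ι ι 𝕜}
    (hC : ∀ k l, Integrable (fun x => C x k l) μ) (i j : ι) :
    ∫ x, schurMultiplier U (C x) X i j ∂μ
      = schurMultiplier U (of fun k l => ∫ x, C x k l ∂μ) X i j := by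
  unfold schurMultiplier
  generalize star (U : Matrix ι ι 𝕜) * X * U = Y
  simp only [mul_apply, hadamard_apply, of_apply, Finset.sum_mul]
  have hint : ∀ k l,
      Integrable (fun x => U i k * (C x k l * Y k l) * star (U : Matrix ι ι 𝕜) l j) μ :=
    fun k l => (((hC k l).mul_const _).const_mul _).mul_const _
  rw [integral_finsetSum _ fun l _ => integrable_finsetSum _ fun k _ => hint k l]
  simp only [integral_finsetSum _ fun k _ => hint k _, integral_mul_const, integral_const_mul]

theorem IsHermitian.cfc_mul_mul_cfc {A : Matrix ι ι 𝕜} (hA : A.IsHermitian) (f g : ℝ → ℝ)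
    (X : Matrix ι ι 𝕜) :
    cfc f A * X * cfc g A = schurMultiplier hA.eigenvectorUnitary
      (of fun k l => ((f (hA.eigenvalues k) * g (hA.eigenvalues l) : ℝ) : 𝕜)) X := by
  have hvec : vecMulVec (fun k => (f (hA.eigenvalues k) : 𝕜)) (fun l => (g (hA.eigenvalues l) : 𝕜))
      = of fun k l => ((f (hA.eigenvalues k) * g (hA.eigenvalues l) : ℝ) : 𝕜) := by
    ext k l
    simp [vecMulVec_apply]
  simp only [hA.cfc_eq, IsHermitian.cfc, Unitary.conjStarAlgAut_apply, schurMultiplier, ← hvec,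
    ← diagonal_mul_mul_diagonal, Matrix.mul_assoc]
  rfl

theorem PosDef.inv_add_smul_one_eq_cfc {A : Matrix ι ι 𝕜} (hA : A.PosDef) {t : ℝ} (ht : 0 ≤ t) :
    (A + t • (1 : Matrix ι ι 𝕜))⁻¹ = cfc (fun x : ℝ => (x + t)⁻¹) A := by
  have hA' : IsSelfAdjoint A := hA.1
  have hshift : A + t • (1 : Matrix ι ι 𝕜) = cfc (fun x : ℝ => x + t) A := by
    rw [cfc_add_const t (fun x : ℝ => x) A, cfc_id' ℝ A, Algebra.algebraMap_eq_smul_one]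
  apply inv_eq_left_inv
  rw [hshift, ← cfc_mul _ _ A (A.finite_real_spectrum.continuousOn _)
    (A.finite_real_spectrum.continuousOn _), ← cfc_const_one ℝ A]
  refine cfc_congr fun x hx => inv_mul_cancel₀ ?_
  obtain ⟨k, rfl⟩ := hA.1.spectrum_real_eq_range_eigenvalues ▸ hx
  exact (add_pos_of_pos_of_nonneg (hA.eigenvalues_pos k) ht).ne'

end Matrix

section Bkm

variable {n : ℕ} {σ : Matrix (Fin n) (Fin n) ℂ}

lemma mpow_eq_cfc (hσ : σ.IsHermitian) (t : ℝ) : mpow hσ t = cfc (fun x : ℝ => x ^ t) σ := by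
  rw [hσ.cfc_eq, IsHermitian.cfc, Unitary.conjStarAlgAut_apply]
  rfl

lemma bkmM_eq_schurMultiplier (hσ : σ.PosDef) (X : Matrix (Fin n) (Fin n) ℂ) :
    bkmM hσ.1 X = schurMultiplier hσ.1.eigenvectorUnitary (of fun k l =>
      ((∫ s in (0:ℝ)..1, hσ.1.eigenvalues k ^ (1 - s) * hσ.1.eigenvalues l ^ s : ℝ) : ℂ)) X := by
  ext i j
  simp only [bkmM, of_apply, mpow_eq_cfc, hσ.1.cfc_mul_mul_cfc,
    intervalIntegral.integral_of_le zero_le_one]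
  rw [integral_schurMultiplier_apply]
  · simp only [of_apply, RCLike.ofReal_eq_complex_ofReal, integral_complex_ofReal]
  · intro k l
    simp only [of_apply]
    exact (continuous_rpow_one_sub_mul_rpow (hσ.eigenvalues_pos k)
      (hσ.eigenvalues_pos l)).integrableOn_Ioc.ofReal

lemma bkmMinv_eq_schurMultiplier (hσ : σ.PosDef) (X : Matrix (Fin n) (Fin n) ℂ) :
    bkmMinv σ X = schurMultiplier hσ.1.eigenvectorUnitary (of fun k l =>
      ((∫ t in Ioi (0:ℝ), ((hσ.1.eigenvalues k + t) * (hσ.1.eigenvalues l + t))⁻¹ : ℝ) : ℂ)) X := by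
  ext i j
  have hres : ∀ t ∈ Ioi (0:ℝ), ((σ + (t : ℂ) • 1)⁻¹ * X * (σ + (t : ℂ) • 1)⁻¹) i j
      = schurMultiplier hσ.1.eigenvectorUnitary (of fun k l =>
        (((hσ.1.eigenvalues k + t)⁻¹ * (hσ.1.eigenvalues l + t)⁻¹ : ℝ) : ℂ)) X i j := by
    intro t ht
    rw [Complex.coe_smul, hσ.inv_add_smul_one_eq_cfc (le_of_lt ht), hσ.1.cfc_mul_mul_cfc,
      RCLike.ofReal_eq_complex_ofReal]
  rw [bkmMinv, of_apply, setIntegral_congr_fun measurableSet_Ioi hres,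
    integral_schurMultiplier_apply]
  · simp only [of_apply, ← mul_inv, integral_complex_ofReal]
  · intro k l
    simp only [of_apply, ← mul_inv]
    exact (integrableOn_Ioi_inv_add_mul_add (hσ.eigenvalues_pos k) (hσ.eigenvalues_pos l)).ofReal

end Bkm

/-- For positive definite `σ`, `M(X) = ∫_0^1 σ^{1-s} X σ^s ds` is invertible with inverse
`M⁻¹(X) = ∫_0^∞ (σ + t I)⁻¹ X (σ + t I)⁻¹ dt`. -/
theorem bkmM_inverse {n : ℕ} (σ : Matrix (Fin n) (Fin n) ℂ) (hσ : σ.PosDef) :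
    (∀ X, bkmMinv σ (bkmM hσ.1 X) = X) ∧ (∀ X, bkmM hσ.1 (bkmMinv σ X) = X) := by
  have hsymbols : ∀ k l,
      ((∫ s in (0:ℝ)..1, hσ.1.eigenvalues k ^ (1 - s) * hσ.1.eigenvalues l ^ s : ℝ) : ℂ) *
        ((∫ t in Ioi (0:ℝ), ((hσ.1.eigenvalues k + t) * (hσ.1.eigenvalues l + t))⁻¹ : ℝ) : ℂ)
        = 1 := fun k l => mod_cast
    integral_rpow_one_sub_mul_rpow_mul_integral_Ioi_inv (hσ.eigenvalues_pos k)
      (hσ.eigenvalues_pos l)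
  refine ⟨fun X => ?_, fun X => ?_⟩
  · rw [bkmM_eq_schurMultiplier hσ, bkmMinv_eq_schurMultiplier hσ]
    exact schurMultiplier_schurMultiplier_of_mul_eq_one _
      (fun k l => (mul_comm _ _).trans (hsymbols k l)) X
  · rw [bkmM_eq_schurMultiplier hσ, bkmMinv_eq_schurMultiplier hσ]
    exact schurMultiplier_schurMultiplier_of_mul_eq_one _ hsymbols X
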